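/- Two Borel probability measures P and Q on ℝ satisfy P ≤lr Q if and only if ROC(P,Q) is concave in the following sense: whenever (a₀,b₀), (a₁,b₁), (a₂,b₂) are three different points in ROC(P,Q) with a₀ ≤ a₁ ≤ a₂ and b₀ ≤ b₁ ≤ b₂, then (b₁−b₀)·(a₂−a₁) ≥ (b₂−b₁)·(a₁−a₀) (equivalently, (b₁−b₀)/(a₁−a₀) ≥ (b₂−b₁)/(a₂−a₁)). -/

import Mathlib

open MeasureTheory Set
open scoped ENNReal

/-- `P` is smaller than `Q` in the likelihood ratio order. -/
def IsLR (P Q : Measure ℝ) : Prop :=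
  ∀ A B : Set ℝ, MeasurableSet A → MeasurableSet B →
    (∀ a ∈ A, ∀ b ∈ B, a ≤ b) → P B * Q A ≤ P A * Q B

/-- The ROC curve of `(P, Q)`: all points `(P H, Q H)` where `H` ranges over
left-bounded half-lines, `∅` and `ℝ`. -/
noncomputable def ROC (P Q : Measure ℝ) : Set (ℝ × ℝ) :=
  {p | ∃ H : Set ℝ,
    (H = ∅ ∨ H = univ ∨ (∃ x : ℝ, H = Ioi x) ∨ (∃ x : ℝ, H = Ici x)) ∧
    p = ((P H).toReal, (Q H).toReal)}

/-!
The points of `ROC P Q` are the pairs `(P U, Q U)` for the upper sets `U` of `ℝ`, and upper sets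
are nested. For `U₀ ⊆ U₁ ⊆ U₂` the concavity inequality at the three points is the lr-inequality
for the adjacent intervals `U₂ \ U₁ ≤ U₁ \ U₀`; this gives one direction.

Conversely, concavity at four points gives the lr-inequality for any two strictly separated
intervals, comparing both slopes with the slope across the gap between them. With one set fixed,
both sides of the inequality are finite measures in the other set, so writing open sets as
countable disjoint unions of intervals and using outer regularity extends it to Borel sets, first
on one side and then on the other. Two sets `A ≤ B` overlap in at most one point, and splitting
off `A ∩ B` reduces the general case to strictly separated sets.
-/

theorem IsUpperSet.eq_empty_or_univ_or_Ioi_or_Ici {α : Type*} [ConditionallyCompleteLinearOrder α]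
    {U : Set α} (hU : IsUpperSet U) :
    U = ∅ ∨ U = univ ∨ (∃ x, U = Ioi x) ∨ (∃ x, U = Ici x) := by
  rcases U.eq_empty_or_nonempty with rfl | hne
  · exact Or.inl rfl
  by_cases hbdd : BddBelow U
  · have hIoi : Ioi (sInf U) ⊆ U := fun x hx =>
      let ⟨u, hu, hux⟩ := exists_lt_of_csInf_lt hne hx
      hU hux.le hu
    by_cases hinf : sInf U ∈ U
    · exact Or.inr <| Or.inr <| Or.inr ⟨sInf U, Subset.antisymm (fun x hx => csInf_le hbdd hx)
        (fun x hx => hU hx hinf)⟩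
    · refine Or.inr <| Or.inr <| Or.inl ⟨sInf U, Subset.antisymm (fun x hx => ?_) hIoi⟩
      exact (csInf_le hbdd hx).lt_of_ne fun h => hinf (h ▸ hx)
  · refine Or.inr <| Or.inl <| eq_univ_of_forall fun x => ?_
    obtain ⟨u, hu, hux⟩ := not_bddBelow_iff.mp hbdd x
    exact hU hux.le hu

theorem Set.OrdConnected.upperClosure_diff {α : Type*} [LinearOrder α] {C : Set α}
    (hC : C.OrdConnected) : (upperClosure C : Set α) \ {y | ∀ x ∈ C, x < y} = C := by
  ext y
  refine ⟨fun ⟨hy, hy'⟩ => ?_,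
    fun hy => ⟨mem_upperClosure.2 ⟨y, hy, le_rfl⟩, fun h => (h y hy).false⟩⟩
  obtain ⟨a, ha, hay⟩ := mem_upperClosure.1 hy
  obtain ⟨b, hb, hyb⟩ : ∃ b ∈ C, y ≤ b := by simpa using hy'
  exact hC.out ha hb ⟨hay, hyb⟩

theorem IsOpen.measure_le_of_forall_isPreconnected {X : Type*} [TopologicalSpace X]
    [LocallyConnectedSpace X] [TopologicalSpace.SeparableSpace X] [MeasurableSpace X]
    [OpensMeasurableSpace X] {μ ν : Measure X}
    (h : ∀ C, IsOpen C → IsPreconnected C → μ C ≤ ν C) {U : Set X} (hU : IsOpen U) :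
    μ U ≤ ν U := by
  obtain ⟨D, hDc, hDd⟩ := TopologicalSpace.exists_countable_dense X
  -- every component of `U` is open, hence meets the countable dense set `D`
  set 𝒞 := connectedComponentIn U '' D
  have hcover : U = ⋃₀ 𝒞 := by
    refine Subset.antisymm (fun x hx => ?_) (sUnion_subset ?_)
    · obtain ⟨d, hdD, hd⟩ := hDd.exists_mem_open hU.connectedComponentIn
        ⟨x, mem_connectedComponentIn hx⟩
      refine ⟨_, mem_image_of_mem _ hdD, ?_⟩
      rw [← connectedComponentIn_eq hd]
      exact mem_connectedComponentIn hx
    · rintro _ ⟨d, -, rfl⟩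
      exact connectedComponentIn_subset _ _
  have hdisj : 𝒞.Pairwise Disjoint := by
    rintro _ ⟨d, -, rfl⟩ _ ⟨e, -, rfl⟩ hne
    exact disjoint_left.2 fun z hz hz' =>
      hne ((connectedComponentIn_eq hz).trans (connectedComponentIn_eq hz').symm)
  have hopen : ∀ C ∈ 𝒞, IsOpen C := by
    rintro _ ⟨d, -, rfl⟩
    exact hU.connectedComponentIn
  have hmeas : ∀ C ∈ 𝒞, MeasurableSet C := fun C hC => (hopen C hC).measurableSet
  rw [hcover, measure_sUnion (hDc.image _) hdisj hmeas, measure_sUnion (hDc.image _) hdisj hmeas]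
  refine ENNReal.tsum_le_tsum fun C => h C (hopen C C.2) ?_
  obtain ⟨d, -, hd⟩ := C.2
  exact hd ▸ isPreconnected_connectedComponentIn

theorem MeasureTheory.Measure.le_of_forall_isPreconnected {X : Type*} [TopologicalSpace X]
    [LocallyConnectedSpace X] [TopologicalSpace.SeparableSpace X] [MeasurableSpace X]
    [OpensMeasurableSpace X] {μ ν : Measure X} [ν.OuterRegular]
    (h : ∀ C, IsOpen C → IsPreconnected C → μ C ≤ ν C) : μ ≤ ν := by
  refine Measure.le_iff'.2 fun A => ?_
  rw [Set.measure_eq_iInf_isOpen A ν]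
  exact le_iInf₂ fun U hAU => le_iInf fun hU =>
    (measure_mono hAU).trans (hU.measure_le_of_forall_isPreconnected h)

theorem mul_measure_le_of_forall_ordConnected {μ ν : Measure ℝ} [IsFiniteMeasure ν]
    {c d : ℝ≥0∞} (hd : d ≠ ∞) {T : Set ℝ} (hT : T.OrdConnected)
    (h : ∀ C ⊆ T, C.OrdConnected → c * μ C ≤ d * ν C) {A : Set ℝ} (hA : A ⊆ T) :
    c * μ A ≤ d * ν A := by
  have := ν.smul_finite hd
  have hle : (c • μ).restrict T ≤ (d • ν).restrict T :=
    Measure.le_of_forall_isPreconnected fun C hCo hCc => by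
      simpa [Measure.restrict_apply hCo.measurableSet] using
        h (C ∩ T) inter_subset_right ((isPreconnected_iff_ordConnected.1 hCc).inter hT)
  simpa [Measure.restrict_eq_self _ hA] using Measure.le_iff'.1 hle A

theorem mul_measure_le_mul_iff_measureReal {μ ν : Measure ℝ} [IsFiniteMeasure μ]
    [IsFiniteMeasure ν] {A B : Set ℝ} :
    μ B * ν A ≤ μ A * ν B ↔ μ.real B * ν.real A ≤ μ.real A * ν.real B := by
  simp only [Measure.real, ← ENNReal.toReal_mul]
  exact (ENNReal.toReal_le_toReal (by finiteness) (by finiteness)).symm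

def HasAntitoneSlopes (S : Set (ℝ × ℝ)) : Prop :=
  ∀ p₀ ∈ S, ∀ p₁ ∈ S, ∀ p₂ ∈ S, p₀ ≤ p₁ → p₁ ≤ p₂ →
    (p₂.2 - p₁.2) * (p₁.1 - p₀.1) ≤ (p₁.2 - p₀.2) * (p₂.1 - p₁.1)

theorem hasAntitoneSlopes_iff {S : Set (ℝ × ℝ)} :
    HasAntitoneSlopes S ↔
      ∀ p₀ p₁ p₂ : ℝ × ℝ, p₀ ∈ S → p₁ ∈ S → p₂ ∈ S →
        p₀ ≠ p₁ → p₀ ≠ p₂ → p₁ ≠ p₂ →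
        p₀.1 ≤ p₁.1 → p₁.1 ≤ p₂.1 → p₀.2 ≤ p₁.2 → p₁.2 ≤ p₂.2 →
        (p₂.2 - p₁.2) * (p₁.1 - p₀.1) ≤ (p₁.2 - p₀.2) * (p₂.1 - p₁.1) := by
  refine ⟨fun h p₀ p₁ p₂ h₀ h₁ h₂ _ _ _ a₀₁ a₁₂ b₀₁ b₁₂ =>
    h p₀ h₀ p₁ h₁ p₂ h₂ (Prod.le_def.2 ⟨a₀₁, b₀₁⟩) (Prod.le_def.2 ⟨a₁₂, b₁₂⟩),
    fun h p₀ h₀ p₁ h₁ p₂ h₂ h₀₁ h₁₂ => ?_⟩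
  rcases eq_or_ne p₀ p₁ with rfl | ne₀₁
  · simp
  rcases eq_or_ne p₁ p₂ with rfl | ne₁₂
  · simp
  have ne₀₂ : p₀ ≠ p₂ := fun e => ne₀₁ (le_antisymm h₀₁ (e ▸ h₁₂))
  exact h p₀ p₁ p₂ h₀ h₁ h₂ ne₀₁ ne₀₂ ne₁₂ h₀₁.1 h₁₂.1 h₀₁.2 h₁₂.2

theorem HasAntitoneSlopes.separated {S : Set (ℝ × ℝ)} (h : HasAntitoneSlopes S)
    {p₀ p₁ p₂ p₃ : ℝ × ℝ} (h₀ : p₀ ∈ S) (h₁ : p₁ ∈ S) (h₂ : p₂ ∈ S) (h₃ : p₃ ∈ S)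
    (h₀₁ : p₀ ≤ p₁) (h₁₂ : p₁ ≤ p₂) (h₂₃ : p₂ ≤ p₃) :
    (p₃.2 - p₂.2) * (p₁.1 - p₀.1) ≤ (p₁.2 - p₀.2) * (p₃.1 - p₂.1) := by
  have h012 := h p₀ h₀ p₁ h₁ p₂ h₂ h₀₁ h₁₂
  have h123 := h p₁ h₁ p₂ h₂ p₃ h₃ h₁₂ h₂₃
  have h013 := h p₀ h₀ p₁ h₁ p₃ h₃ h₀₁ (h₁₂.trans h₂₃)
  have h023 := h p₀ h₀ p₂ h₂ p₃ h₃ (h₀₁.trans h₁₂) h₂₃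
  obtain ⟨⟨a₀₁, b₀₁⟩, ⟨a₁₂, b₁₂⟩, ⟨-, b₂₃⟩⟩ := And.intro h₀₁ (And.intro h₁₂ h₂₃)
  rcases a₁₂.eq_or_lt with ha | ha
  · rw [← ha]
    nlinarith [mul_nonneg (sub_nonneg.2 b₁₂) (sub_nonneg.2 a₀₁)]
  rcases b₁₂.eq_or_lt with hb | hb
  · rw [← hb] at h023
    nlinarith [mul_nonneg (sub_nonneg.2 b₂₃) (sub_nonneg.2 a₁₂)]
  -- the slopes of the first and last segment are compared through the middle one
  have := mul_le_mul h012 h123 (mul_nonneg (sub_nonneg.2 b₂₃) (sub_nonneg.2 a₁₂))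
    (mul_nonneg (sub_nonneg.2 b₀₁) (sub_nonneg.2 a₁₂))
  exact le_of_mul_le_mul_left (by linarith) (mul_pos (sub_pos.2 hb) (sub_pos.2 ha))

theorem mem_ROC_iff {P Q : Measure ℝ} {p : ℝ × ℝ} :
    p ∈ ROC P Q ↔ ∃ U : Set ℝ, IsUpperSet U ∧ p = (P.real U, Q.real U) := by
  refine ⟨fun ⟨H, hH, hp⟩ => ⟨H, ?_, hp⟩, fun ⟨U, hU, hp⟩ =>
    ⟨U, hU.eq_empty_or_univ_or_Ioi_or_Ici, hp⟩⟩
  rcases hH with rfl | rfl | ⟨x, rfl⟩ | ⟨x, rfl⟩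
  exacts [isUpperSet_empty, isUpperSet_univ, isUpperSet_Ioi x, isUpperSet_Ici x]

theorem isLR_of_forall_lt {P Q : Measure ℝ}
    (h : ∀ A B : Set ℝ, MeasurableSet A → MeasurableSet B →
      (∀ a ∈ A, ∀ b ∈ B, a < b) → P B * Q A ≤ P A * Q B) : IsLR P Q := by
  intro A B hA hB hAB
  set I := A ∩ B
  have h₁ := h (A \ B) (B \ A) (hA.diff hB) (hB.diff hA) fun a ha b hb =>
    (hAB a ha.1 b hb.1).lt_of_ne (by rintro rfl; exact ha.2 hb.1)
  have h₂ := h (A \ B) I (hA.diff hB) (hA.inter hB) fun a ha b hb =>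
    (hAB a ha.1 b hb.2).lt_of_ne (by rintro rfl; exact ha.2 hb.2)
  have h₃ := h I (B \ A) (hA.inter hB) (hB.diff hA) fun a ha b hb =>
    (hAB a ha.1 b hb.1).lt_of_ne (by rintro rfl; exact hb.2 ha.1)
  have hA_eq : ∀ μ : Measure ℝ, μ A = μ (A \ B) + μ I := fun μ =>
    (measure_sdiff_add_inter A hB).symm
  have hB_eq : ∀ μ : Measure ℝ, μ B = μ (B \ A) + μ I := fun μ => by
    rw [show I = B ∩ A from inter_comm A B]; exact (measure_sdiff_add_inter B hA).symm
  rw [hA_eq P, hA_eq Q, hB_eq P, hB_eq Q]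
  calc (P (B \ A) + P I) * (Q (A \ B) + Q I)
      = P (B \ A) * Q (A \ B) + P I * Q (A \ B) + (P (B \ A) * Q I + P I * Q I) := by ring
    _ ≤ P (A \ B) * Q (B \ A) + P (A \ B) * Q I + (P I * Q (B \ A) + P I * Q I) :=
        add_le_add (add_le_add h₁ h₂) (add_le_add h₃ le_rfl)
    _ = (P (A \ B) + P I) * (Q (B \ A) + Q I) := by ring

theorem IsLR.hasAntitoneSlopes {P Q : Measure ℝ} [IsFiniteMeasure P] [IsFiniteMeasure Q]
    (h : IsLR P Q) : HasAntitoneSlopes (ROC P Q) := by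
  rintro _ hp₀ _ hp₁ _ hp₂ h₀₁ h₁₂
  obtain ⟨U₀, hU₀, rfl⟩ := mem_ROC_iff.1 hp₀
  obtain ⟨U₁, hU₁, rfl⟩ := mem_ROC_iff.1 hp₁
  obtain ⟨U₂, hU₂, rfl⟩ := mem_ROC_iff.1 hp₂
  rcases hU₁.total hU₀ with h₁₀ | h₀₁'
  · have ha : P.real U₁ = P.real U₀ := le_antisymm (measureReal_mono h₁₀) h₀₁.1
    have hb : Q.real U₁ = Q.real U₀ := le_antisymm (measureReal_mono h₁₀) h₀₁.2
    simp [ha, hb]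
  rcases hU₂.total hU₁ with h₂₁ | h₁₂'
  · have ha : P.real U₂ = P.real U₁ := le_antisymm (measureReal_mono h₂₁) h₁₂.1
    have hb : Q.real U₂ = Q.real U₁ := le_antisymm (measureReal_mono h₂₁) h₁₂.2
    simp [ha, hb]
  have hsep : ∀ a ∈ U₂ \ U₁, ∀ b ∈ U₁ \ U₀, a ≤ b := fun a ha b hb =>
    le_of_not_ge fun hba => ha.2 (hU₁ hba hb.1)
  have hlr := mul_measure_le_mul_iff_measureReal.1 <|
    h _ _ (hU₂.ordConnected.measurableSet.diff hU₁.ordConnected.measurableSet)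
      (hU₁.ordConnected.measurableSet.diff hU₀.ordConnected.measurableSet) hsep
  rw [measureReal_sdiff h₀₁' hU₀.ordConnected.measurableSet,
    measureReal_sdiff h₁₂' hU₁.ordConnected.measurableSet,
    measureReal_sdiff h₀₁' hU₀.ordConnected.measurableSet,
    measureReal_sdiff h₁₂' hU₁.ordConnected.measurableSet] at hlr
  dsimp only
  linarith

theorem HasAntitoneSlopes.lr_of_ordConnected {P Q : Measure ℝ} [IsFiniteMeasure P]
    [IsFiniteMeasure Q] (h : HasAntitoneSlopes (ROC P Q)) {C C' : Set ℝ} (hC : C.OrdConnected)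
    (hC' : C'.OrdConnected) (hlt : ∀ x ∈ C, ∀ y ∈ C', x < y) : P C' * Q C ≤ P C * Q C' := by
  rcases C.eq_empty_or_nonempty with rfl | ⟨c, hc⟩
  · simp
  rcases C'.eq_empty_or_nonempty with rfl | ⟨c', hc'⟩
  · simp
  -- `C = H \ K` and `C' = H' \ K'` for the upper sets `K' ⊆ H' ⊆ K ⊆ H` below
  set H := (upperClosure C : Set ℝ)
  set K := {y | ∀ x ∈ C, x < y}
  set H' := (upperClosure C' : Set ℝ)
  set K' := {y | ∀ x ∈ C', x < y}
  have hK : IsUpperSet K := fun a b hab ha x hx => (ha x hx).trans_le hab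
  have hK' : IsUpperSet K' := fun a b hab ha x hx => (ha x hx).trans_le hab
  have hKH : K ⊆ H := fun y hy => mem_upperClosure.2 ⟨c, hc, (hy c hc).le⟩
  have hK'H' : K' ⊆ H' := fun y hy => mem_upperClosure.2 ⟨c', hc', (hy c' hc').le⟩
  have hH'K : H' ⊆ K := fun y hy x hx =>
    let ⟨a, ha, hay⟩ := mem_upperClosure.1 hy
    (hlt x hx a ha).trans_le hay
  have mem : ∀ U : Set ℝ, IsUpperSet U → (P.real U, Q.real U) ∈ ROC P Q :=
    fun U hU => mem_ROC_iff.2 ⟨U, hU, rfl⟩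
  have mono : ∀ {U V : Set ℝ}, U ⊆ V → (P.real U, Q.real U) ≤ (P.real V, Q.real V) :=
    fun hUV => ⟨measureReal_mono hUV, measureReal_mono hUV⟩
  have hslopes := h.separated (mem K' hK') (mem H' (upperClosure C').upper) (mem K hK)
    (mem H (upperClosure C).upper) (mono hK'H') (mono hH'K) (mono hKH)
  have hdiff : ∀ μ : Measure ℝ, [IsFiniteMeasure μ] →
      μ.real C = μ.real H - μ.real K ∧ μ.real C' = μ.real H' - μ.real K' := fun μ _ =>
    ⟨by rw [← measureReal_sdiff hKH hK.ordConnected.measurableSet, hC.upperClosure_diff],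
      by rw [← measureReal_sdiff hK'H' hK'.ordConnected.measurableSet, hC'.upperClosure_diff]⟩
  rw [mul_measure_le_mul_iff_measureReal, (hdiff P).1, (hdiff P).2, (hdiff Q).1, (hdiff Q).2]
  dsimp only at hslopes
  linarith

theorem HasAntitoneSlopes.isLR {P Q : Measure ℝ} [IsFiniteMeasure P] [IsFiniteMeasure Q]
    (h : HasAntitoneSlopes (ROC P Q)) : IsLR P Q := by
  refine isLR_of_forall_lt fun A B _ _ hAB => ?_
  set T := (lowerClosure A : Set ℝ)
  set T' := (upperClosure B : Set ℝ)
  have hTT' : ∀ x ∈ T, ∀ y ∈ T', x < y := fun x hx y hy => by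
    obtain ⟨a, ha, hxa⟩ := mem_lowerClosure.1 hx
    obtain ⟨b, hb, hby⟩ := mem_upperClosure.1 hy
    exact hxa.trans_lt ((hAB a ha b hb).trans_le hby)
  have hleft : ∀ C' ⊆ T', C'.OrdConnected → Q A * P C' ≤ P A * Q C' := fun C' hC'T hC' => by
    have := mul_measure_le_of_forall_ordConnected (μ := Q) (ν := P) (c := P C')
      (measure_ne_top Q C') (lowerClosure A).lower.ordConnected (fun C hCT hC => by
        rw [mul_comm (Q C')]
        exact h.lr_of_ordConnected hC hC' fun x hx y hy => hTT' x (hCT hx) y (hC'T hy))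
      subset_lowerClosure
    rwa [mul_comm (Q A), mul_comm (P A)]
  rw [mul_comm (P B)]
  exact mul_measure_le_of_forall_ordConnected (measure_ne_top P A)
    (upperClosure B).upper.ordConnected hleft subset_upperClosure

/-- **Corollary (lr-order ⇔ concavity of the ROC curve).** `P ≤lr Q` iff for
any three different points `(a₀,b₀), (a₁,b₁), (a₂,b₂)` of `ROC(P,Q)` with
`a₀ ≤ a₁ ≤ a₂` and `b₀ ≤ b₁ ≤ b₂` one has
`(b₂ - b₁)(a₁ - a₀) ≤ (b₁ - b₀)(a₂ - a₁)`. -/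
theorem stmt5 (P Q : Measure ℝ) [IsProbabilityMeasure P] [IsProbabilityMeasure Q] :
    IsLR P Q ↔
      ∀ p₀ p₁ p₂ : ℝ × ℝ, p₀ ∈ ROC P Q → p₁ ∈ ROC P Q → p₂ ∈ ROC P Q →
        p₀ ≠ p₁ → p₀ ≠ p₂ → p₁ ≠ p₂ →
        p₀.1 ≤ p₁.1 → p₁.1 ≤ p₂.1 → p₀.2 ≤ p₁.2 → p₁.2 ≤ p₂.2 →
        (p₂.2 - p₁.2) * (p₁.1 - p₀.1) ≤ (p₁.2 - p₀.2) * (p₂.1 - p₁.1) :=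
  (Iff.intro IsLR.hasAntitoneSlopes HasAntitoneSlopes.isLR).trans hasAntitoneSlopes_iff
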